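/- The map i from SL(n+2,ℝ) to SL(n+3,ℝ), sending a block matrix X = (x_{rs}) with blocks of sizes (1,1,n)×(1,1,n) to the block matrix (of block sizes (1,1,1,n)×(1,1,1,n)) whose rows are (x_{11}, x_{12}, 0, x_{13}), (x_{21}, x_{22}, 0, x_{23}), (x_{21}, x_{22}−1, 1, x_{23}), (x_{31}, x_{32}, 0, x_{33}), is an injective group homomorphism. -/

import Mathlib

open Matrix

/-- The index map `Fin (n+3) → Fin (n+2)` collapsing the third index onto the second
(rows/columns of the Fefferman-type embedding): `0 ↦ 0`, `1 ↦ 1`, `2 ↦ 1`, `k+3 ↦ k+2`. -/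
def femIdx (n : ℕ) : Fin (n + 3) → Fin (n + 2) := fun r =>
  if _ : r.val < 2 then ⟨r.val, by omega⟩
  else if _ : r.val = 2 then ⟨1, by omega⟩
  else ⟨r.val - 1, by have := r.isLt; omega⟩

/-- The map `i : SL(n+2,ℝ) → SL(n+3,ℝ)` of the Fefferman-type construction, sending a
block matrix `X = (x_{rs})` (blocks of sizes (1,1,n)) to the block matrix (blocks
(1,1,1,n)) with rows `(x₁₁, x₁₂, 0, x₁₃)`, `(x₂₁, x₂₂, 0, x₂₃)`, `(x₂₁, x₂₂−1, 1, x₂₃)`,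
`(x₃₁, x₃₂, 0, x₃₃)`. -/
def iMat (n : ℕ) (X : Matrix (Fin (n + 2)) (Fin (n + 2)) ℝ) :
    Matrix (Fin (n + 3)) (Fin (n + 3)) ℝ :=
  Matrix.of fun r s =>
    (if s.val = 2 then (if r.val = 2 then (1 : ℝ) else 0)
     else X (femIdx n r) (femIdx n s))
    - (if r.val = 2 ∧ s.val = 1 then (1 : ℝ) else 0)

def femEquiv (n : ℕ) : Fin (n + 3) ≃ (Fin (n + 2) ⊕ Unit) where
  toFun r := if _ : r.val = 2 then Sum.inr () else Sum.inl (femIdx n r)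
  invFun x := match x with
    | .inl k => if _ : k.val < 2 then ⟨k.val, by omega⟩ else ⟨k.val + 1, by have := k.isLt; omega⟩
    | .inr _ => ⟨2, by omega⟩
  left_inv r := by
    unfold femIdx
    by_cases h : r.val = 2
    · simp only [h, dite_true]
      exact Fin.ext h.symm
    · by_cases h2 : r.val < 2
      · simp only [h, h2, dite_true, dite_false]
      · have := r.isLt
        simp only [h, h2, dite_false]
        have : ¬ ((⟨r.val - 1, by omega⟩ : Fin (n+2)).val < 2) := by simp; omega
        simp only [this, dite_false]
        exact Fin.ext (by simp; omega)
  right_inv x := by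
    match x with
    | .inr _ => simp
    | .inl k =>
      unfold femIdx
      by_cases h : k.val < 2
      · simp only [h, dite_true]
        have : ¬ ((⟨k.val, by omega⟩ : Fin (n+3)).val = 2) := by simp; omega
        simp only [this, dite_false, h, dite_true]
      · have := k.isLt
        simp only [h, dite_false]
        have h1 : ¬ ((⟨k.val + 1, by omega⟩ : Fin (n+3)).val = 2) := by simp; omega
        have h2 : ¬ ((⟨k.val + 1, by omega⟩ : Fin (n+3)).val < 2) := by simp only [Fin.val_mk]; omega
        simp only [h1, h2, dite_false]
        exact congrArg Sum.inl (Fin.ext (by simp))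

def Lmat (n : ℕ) (X : Matrix (Fin (n + 2)) (Fin (n + 2)) ℝ) :
    Matrix (Fin (n + 3)) (Fin (n + 3)) ℝ :=
  (Matrix.fromBlocks X 0 0 1).submatrix (femEquiv n) (femEquiv n)

lemma Lmat_apply (n : ℕ) (X : Matrix (Fin (n + 2)) (Fin (n + 2)) ℝ)
    (r s : Fin (n + 3)) :
    Lmat n X r s =
      if r.val = 2 then (if s.val = 2 then 1 else 0)
      else (if s.val = 2 then 0 else X (femIdx n r) (femIdx n s)) := by
  unfold Lmat femEquiv
  by_cases h : r.val = 2 <;> by_cases h' : s.val = 2 <;>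
    simp [h, h', Matrix.submatrix_apply, Matrix.one_apply]

noncomputable def Tm (n : ℕ) : Matrix (Fin (n + 3)) (Fin (n + 3)) ℝ :=
  1 + Matrix.single 2 1 (1 : ℝ)

noncomputable def Tm' (n : ℕ) : Matrix (Fin (n + 3)) (Fin (n + 3)) ℝ :=
  1 - Matrix.single 2 1 (1 : ℝ)

lemma E_mul_E (n : ℕ) :
    (Matrix.single 2 1 (1 : ℝ) : Matrix (Fin (n+3)) (Fin (n+3)) ℝ) *
      Matrix.single 2 1 (1 : ℝ) = 0 := by
  rw [Matrix.single_mul_single_of_ne]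
  exact Fin.ne_of_val_ne (by simp [Nat.mod_eq_of_lt (show 2 < n + 3 by omega)])

lemma Tm_mul_Tm' (n : ℕ) : Tm n * Tm' n = 1 := by
  unfold Tm Tm'
  rw [Matrix.mul_sub, Matrix.add_mul, Matrix.add_mul]
  simp [E_mul_E n]

lemma Tm'_mul_Tm (n : ℕ) : Tm' n * Tm n = 1 := by
  unfold Tm Tm'
  rw [Matrix.mul_add, Matrix.sub_mul, Matrix.sub_mul]
  simp [E_mul_E n]

lemma femIdx_two (n : ℕ) : femIdx n 2 = femIdx n 1 := by
  unfold femIdx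
  norm_num [Nat.mod_eq_of_lt (show 2 < n + 3 by omega)]

lemma iMat_eq (n : ℕ) (X : Matrix (Fin (n + 2)) (Fin (n + 2)) ℝ) :
    iMat n X = Tm n * Lmat n X * Tm' n := by
  unfold Tm Tm'
  rw [Matrix.mul_sub, Matrix.add_mul, Matrix.add_mul]
  ext r s
  have hL12 : Lmat n X 1 2 = 0 := by rw [Lmat_apply]; norm_num
  by_cases hr : r = 2 <;> by_cases hs : s = 1
  · subst hr hs
    simp only [iMat, Matrix.of_apply, Matrix.sub_apply, Matrix.add_apply, Matrix.one_mul,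
      Matrix.mul_one, Matrix.single_mul_apply_same,
      Matrix.mul_single_apply_same, Lmat_apply, one_mul, mul_one]
    norm_num [femIdx_two]
  · subst hr
    simp only [iMat, Matrix.of_apply, Matrix.sub_apply, Matrix.add_apply, Matrix.one_mul,
      Matrix.mul_one, Matrix.single_mul_apply_same,
      Matrix.mul_single_apply_of_ne _ _ _ _ _ hs, Lmat_apply, one_mul]
    have hs2 : ((2:Fin (n+3)).val = 2) := rfl
    have hs' : ¬ (s.val = 1) := fun h => hs (Fin.ext (by simpa using h))
    by_cases h' : s.val = 2 <;> simp [h', hs2, hs', femIdx_two]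
  · subst hs
    have hr2 : ¬ (r.val = 2) := fun h => hr (Fin.ext h)
    simp only [iMat, Matrix.of_apply, Matrix.sub_apply, Matrix.add_apply, Matrix.one_mul,
      Matrix.mul_one, Matrix.single_mul_apply_of_ne _ _ _ _ _ hr,
      Matrix.mul_single_apply_same, Lmat_apply, one_mul, mul_one]
    simp [hr2]
  · have hr2 : ¬ (r.val = 2) := fun h => hr (Fin.ext h)
    simp only [iMat, Matrix.of_apply, Matrix.sub_apply, Matrix.add_apply, Matrix.one_mul,
      Matrix.mul_one, Matrix.single_mul_apply_of_ne _ _ _ _ _ hr,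
      Matrix.mul_single_apply_of_ne _ _ _ _ _ hs, Lmat_apply, one_mul]
    simp [hr2]

lemma Lmat_mul (n : ℕ) (X Y : Matrix (Fin (n + 2)) (Fin (n + 2)) ℝ) :
    Lmat n (X * Y) = Lmat n X * Lmat n Y := by
  unfold Lmat
  rw [Matrix.submatrix_mul_equiv, Matrix.fromBlocks_multiply]
  simp

lemma Lmat_det (n : ℕ) (X : Matrix (Fin (n + 2)) (Fin (n + 2)) ℝ) :
    (Lmat n X).det = X.det := by
  unfold Lmat
  rw [Matrix.det_submatrix_equiv_self, Matrix.det_fromBlocks_zero₂₁]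
  simp

lemma cancel₁ (n : ℕ) (M : Matrix (Fin (n + 3)) (Fin (n + 3)) ℝ) :
    Tm' n * (Tm n * M) = M := by
  rw [← Matrix.mul_assoc, Tm'_mul_Tm, Matrix.one_mul]


/-- `i` is an injective group homomorphism `SL(n+2,ℝ) → SL(n+3,ℝ)`: it maps into
`SL(n+3,ℝ)`, is multiplicative, and is injective. -/
theorem stmt0 (n : ℕ) :
    (∀ X : Matrix.SpecialLinearGroup (Fin (n + 2)) ℝ, (iMat n X.val).det = 1) ∧
    (∀ X Y : Matrix.SpecialLinearGroup (Fin (n + 2)) ℝ,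
      iMat n (X * Y).val = iMat n X.val * iMat n Y.val) ∧
    Function.Injective
      (fun X : Matrix.SpecialLinearGroup (Fin (n + 2)) ℝ => iMat n X.val) := by
  have hTT' := congrArg Matrix.det (Tm_mul_Tm' n)
  rw [Matrix.det_mul, Matrix.det_one] at hTT'
  refine ⟨?_, ?_, ?_⟩
  · intro X
    rw [iMat_eq, Matrix.det_mul, Matrix.det_mul, Lmat_det]
    have := X.prop
    rw [this]
    rw [mul_one, hTT']
  · intro X Y
    have hco : ((X * Y : Matrix.SpecialLinearGroup (Fin (n + 2)) ℝ) : Matrix _ _ ℝ)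
        = X.val * Y.val := rfl
    rw [hco, iMat_eq, iMat_eq, iMat_eq, Lmat_mul]
    calc Tm n * (Lmat n X.val * Lmat n Y.val) * Tm' n
        = Tm n * Lmat n X.val * ((Tm' n * Tm n) * (Lmat n Y.val * Tm' n)) := by
          rw [Tm'_mul_Tm, Matrix.one_mul]
          simp only [Matrix.mul_assoc]
      _ = Tm n * Lmat n X.val * Tm' n * (Tm n * Lmat n Y.val * Tm' n) := by
          simp only [Matrix.mul_assoc]
  · intro X Y h
    simp only [iMat_eq] at h
    have h2 : Lmat n X.val = Lmat n Y.val := by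
      have := congrArg (fun M => Tm' n * M * Tm n) h
      simp only [Matrix.mul_assoc, cancel₁] at this
      simpa only [Matrix.mul_assoc, Tm'_mul_Tm, Matrix.mul_one] using this
    have h3 : Matrix.fromBlocks X.val 0 0 (1 : Matrix Unit Unit ℝ)
        = Matrix.fromBlocks Y.val 0 0 1 := by
      have := congrArg
        (fun M => M.submatrix (femEquiv n).symm (femEquiv n).symm) h2
      simpa [Lmat, Matrix.submatrix_submatrix, Equiv.self_comp_symm] using this
    apply Subtype.ext
    ext a b
    have := congrFun (congrFun (congrArg (fun M => (M : Matrix _ _ ℝ)) h3) (Sum.inl a)) (Sum.inl b)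
    simpa using this
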